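/- arXiv:2604.10977 — 5 statements merged into one kernel-verified Lean document; each statement's English description precedes it below -/
import Mathlib

section
/- Let R > 0, E₀ ∈ ℝ, and let w, b : ℝ → ℝ be continuous and nonnegative on [0, R], and suppose there exists k₀ ∈ [0, R] with w(k₀)·b(k₀) > 0. Define Z(β) := 2·∫₀^R w(k)·exp(−β·E₀)·sinh(β·b(k)) dk. Then there do not exist a real number E⋆ and a nonzero (Borel) measure ν on ℝ with ν((−∞,0)) = 0 such that for every β > 0 the function λ ↦ exp(−β·λ) is ν-integrable and Z(β) = exp(−β·E⋆)·∫ exp(−β·λ) dν(λ). Equivalently, Z is not the ordinary thermal trace of any lower-bounded self-adjoint β-independent Hamiltonian. -/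
open MeasureTheory

/-!
The amplitude is continuous in `β` and vanishes at `β = 0`, since `sinh 0 = 0`. A thermal trace
cannot do this: on `[0, ∞)` the weights `exp (-β * λ)` increase as `β` decreases, so for `β ≤ 1`
the trace is at least `exp (-β * E⋆) * ∫ exp (-λ) dν`, which tends to the positive number
`∫ exp (-λ) dν`.
-/

open Set Filter Topology Real
open scoped Interval

/-- On `[[a, b]]` the integrand agrees with the continuous `(x, t) ↦ F x (projIcc t)`. -/
theorem intervalIntegral.continuous_parametric_of_continuousOn {X E : Type*} [TopologicalSpace X]
    [NormedAddCommGroup E] [NormedSpace ℝ E] {F : X → ℝ → E} {a b : ℝ}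
    (hF : ContinuousOn (Function.uncurry F) (univ ×ˢ [[a, b]])) :
    Continuous fun x => ∫ t in a..b, F x t := by
  let G : X → ℝ → E := fun x t => F x (projIcc (a ⊓ b) (a ⊔ b) inf_le_sup t)
  have hG : Continuous (Function.uncurry G) :=
    hF.comp_continuous (continuous_fst.prodMk (continuous_subtype_val.comp
      ((continuous_projIcc (h := inf_le_sup)).comp continuous_snd)))
      fun p => ⟨mem_univ _, Subtype.mem _⟩
  have hFG : ∀ x, ∫ t in a..b, F x t = ∫ t in a..b, G x t := fun x =>
    intervalIntegral.integral_congr fun t ht => by simp only [G, projIcc_of_mem _ ht]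
  simpa only [hFG] using
    intervalIntegral.continuous_parametric_intervalIntegral_of_continuous' hG a b

theorem continuous_intervalIntegral_mul_exp_mul_sinh {a a' E₀ : ℝ} {w b : ℝ → ℝ}
    (hw : ContinuousOn w [[a, a']]) (hb : ContinuousOn b [[a, a']]) :
    Continuous fun β => ∫ k in a..a', w k * exp (-β * E₀) * sinh (β * b k) := by
  apply intervalIntegral.continuous_parametric_of_continuousOn
  have hsnd : MapsTo Prod.snd (univ ×ˢ [[a, a']] : Set (ℝ × ℝ)) [[a, a']] := fun p hp => hp.2
  exact ((hw.comp continuousOn_snd hsnd).mul (by fun_prop)).mul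
    (continuous_sinh.comp_continuousOn (continuousOn_fst.mul (hb.comp continuousOn_snd hsnd)))

theorem integral_exp_neg_mul_le_of_le {ν : Measure ℝ} (hν : ν (Iio 0) = 0) {β γ : ℝ}
    (hβγ : β ≤ γ) (hint : Integrable (fun x => exp (-β * x)) ν) :
    ∫ x, exp (-γ * x) ∂ν ≤ ∫ x, exp (-β * x) ∂ν := by
  have hnonneg : ∀ᵐ x ∂ν, 0 ≤ x := by
    rw [ae_iff]
    simp only [not_le]
    exact hν
  refine integral_mono_of_nonneg (.of_forall fun x => (exp_pos _).le) hint ?_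
  filter_upwards [hnonneg] with x hx
  exact exp_le_exp.2 (by nlinarith)

theorem branch_difference_not_thermal_trace_general
    (R E₀ : ℝ) (hR : 0 < R) (w b : ℝ → ℝ)
    (hw : ContinuousOn w (Set.Icc 0 R)) (hb : ContinuousOn b (Set.Icc 0 R)) :
    ¬ ∃ (Estar : ℝ) (ν : Measure ℝ), ν ≠ 0 ∧ ν (Set.Iio 0) = 0 ∧
        ∀ β : ℝ, 0 < β →
          Integrable (fun lam : ℝ => Real.exp (-β*lam)) ν ∧
          (2 * ∫ k in (0:ℝ)..R, w k * Real.exp (-β*E₀) * Real.sinh (β * b k))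
            = Real.exp (-β*Estar) * ∫ lam : ℝ, Real.exp (-β*lam) ∂ν := by
  rintro ⟨Estar, ν, hν, hν_neg, htrace⟩
  have : NeZero ν := ⟨hν⟩
  set c := ∫ x, exp (-1 * x) ∂ν
  have hc : 0 < c := integral_exp_pos (htrace 1 one_pos).1
  rw [← uIcc_of_le hR.le] at hw hb
  have hamplitude : Tendsto (fun β => 2 * ∫ k in (0:ℝ)..R, w k * exp (-β * E₀) * sinh (β * b k))
      (𝓝[>] 0) (𝓝 0) := by
    have := ((continuous_intervalIntegral_mul_exp_mul_sinh (E₀ := E₀) hw hb).tendsto 0).const_mul 2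
    simpa using this.mono_left nhdsWithin_le_nhds
  have hlower : Tendsto (fun β : ℝ => exp (-β * Estar) * c) (𝓝[>] 0) (𝓝 c) := by
    have := (by fun_prop : Continuous fun β : ℝ => exp (-β * Estar) * c).tendsto 0
    simpa using this.mono_left nhdsWithin_le_nhds
  have hle : ∀ᶠ β in 𝓝[>] 0,
      exp (-β * Estar) * c ≤ 2 * ∫ k in (0:ℝ)..R, w k * exp (-β * E₀) * sinh (β * b k) := by
    filter_upwards [Ioc_mem_nhdsGT one_pos] with β hβ
    obtain ⟨hint, heq⟩ := htrace β hβ.1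
    rw [heq]
    exact mul_le_mul_of_nonneg_left (integral_exp_neg_mul_le_of_le hν_neg hβ.2 hint) (exp_pos _).le
  exact hc.not_ge (le_of_tendsto_of_tendsto hlower hamplitude hle)

/-- Thermal-trace obstruction: a compact-support branch-difference amplitude
with strictly positive `w(k₀)·b(k₀)` somewhere cannot be written as
`e^{−βE⋆}·∫ e^{−βλ} dν(λ)` for a nonzero measure `ν` supported on `[0, ∞)`,
i.e. it is not the ordinary thermal trace of any lower-bounded self-adjoint
β-independent Hamiltonian. -/
theorem branch_difference_not_thermal_trace
    (R E₀ : ℝ) (hR : 0 < R) (w b : ℝ → ℝ)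
    (hw : ContinuousOn w (Set.Icc 0 R)) (hb : ContinuousOn b (Set.Icc 0 R))
    (hw0 : ∀ k ∈ Set.Icc 0 R, 0 ≤ w k) (hb0 : ∀ k ∈ Set.Icc 0 R, 0 ≤ b k)
    (k₀ : ℝ) (hk₀ : k₀ ∈ Set.Icc 0 R) (hpos : 0 < w k₀ * b k₀) :
    ¬ ∃ (Estar : ℝ) (ν : Measure ℝ), ν ≠ 0 ∧ ν (Set.Iio 0) = 0 ∧
        ∀ β : ℝ, 0 < β →
          Integrable (fun lam : ℝ => Real.exp (-β*lam)) ν ∧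
          (2 * ∫ k in (0:ℝ)..R, w k * Real.exp (-β*E₀) * Real.sinh (β * b k))
            = Real.exp (-β*Estar) * ∫ lam : ℝ, Real.exp (-β*lam) ∂ν :=
  branch_difference_not_thermal_trace_general R E₀ hR w b hw hb
end

section
/- Fix φr > 0 and ε > 0, set R = φr/ε and E±(k) = (φr ± √(φr² − ε²k²))/ε², and define the exact finite-cutoff JT disk amplitude Z(β) := ∫₀^R k·sinh(2πk)·(exp(−β·E₋(k)) − exp(−β·E₊(k))) dk for β > 0. Then (i) Z(β) → 0 as β → 0⁺, and (ii) there do not exist a real number E⋆ and a nonzero Borel measure ν on ℝ with ν((−∞,0)) = 0 such that for every β > 0 the function λ ↦ exp(−β·λ) is ν-integrable and Z(β) = exp(−β·E⋆)·∫ exp(−β·λ) dν(λ). -/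
open MeasureTheory Filter Real Set Topology

/-!
At `β = 0` the two branches contribute `e⁰ - e⁰ = 0` pointwise, and the amplitude is continuous
in `β`, so it tends to `0` as `β → 0⁺`. A thermal trace `e^{-βE⋆} ∫ e^{-βλ} dν` cannot do this:
integrability of `e^{-βλ}` makes `ν (Iic b)` finite, and on `Iic b` the integrand is at least
`e^{-βb}`, so the trace is bounded below by `e^{-β(E⋆ + b)} ν (Iic b)`, which tends to
`ν (Iic b) > 0` once `b` is large enough.
-/

noncomputable def jtDiskAmplitude (φr ε β : ℝ) : ℝ :=
  ∫ k in (0:ℝ)..(φr/ε),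
    k * sinh (2*π*k) *
      (exp (-β*((φr - √(φr^2 - ε^2*k^2))/ε^2)) - exp (-β*((φr + √(φr^2 - ε^2*k^2))/ε^2)))

lemma continuous_jtDiskAmplitude (φr ε : ℝ) : Continuous (jtDiskAmplitude φr ε) :=
  intervalIntegral.continuous_parametric_intervalIntegral_of_continuous' (by fun_prop) _ _

lemma jtDiskAmplitude_zero (φr ε : ℝ) : jtDiskAmplitude φr ε 0 = 0 := by
  simp [jtDiskAmplitude]

lemma tendsto_jtDiskAmplitude_nhdsGT_zero (φr ε : ℝ) :
    Tendsto (jtDiskAmplitude φr ε) (𝓝[>] 0) (𝓝 0) := by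
  simpa only [jtDiskAmplitude_zero] using
    ((continuous_jtDiskAmplitude φr ε).tendsto 0).mono_left nhdsWithin_le_nhds

namespace MeasureTheory

variable {ν : Measure ℝ} {β : ℝ}

lemma Integrable.measure_Iic_lt_top_of_exp (hβ : 0 ≤ β)
    (h : Integrable (fun x => exp (-β*x)) ν) (b : ℝ) : ν (Iic b) < ⊤ := by
  refine (measure_mono fun x (hx : x ≤ b) => ?_).trans_lt (h.measure_ge_lt_top (exp_pos (-β*b)))
  exact exp_le_exp.mpr (by nlinarith)

lemma exp_mul_measureReal_Iic_le_integral_exp (hβ : 0 ≤ β)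
    (h : Integrable (fun x => exp (-β*x)) ν) (b : ℝ) :
    exp (-β*b) * ν.real (Iic b) ≤ ∫ x, exp (-β*x) ∂ν :=
  calc exp (-β*b) * ν.real (Iic b)
      ≤ ∫ x in Iic b, exp (-β*x) ∂ν :=
        setIntegral_ge_of_const_le_real measurableSet_Iic
          (h.measure_Iic_lt_top_of_exp hβ b).ne
          (fun x (hx : x ≤ b) => exp_le_exp.mpr (by nlinarith)) h.integrableOn
    _ ≤ ∫ x, exp (-β*x) ∂ν :=
        setIntegral_le_integral h (.of_forall fun _ => (exp_pos _).le)

lemma Measure.exists_measure_Iic_natCast_ne_zero (hν : ν ≠ 0) : ∃ n : ℕ, ν (Iic (n:ℝ)) ≠ 0 := by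
  by_contra! h
  have hcover : (⋃ n : ℕ, Iic (n:ℝ)) = univ :=
    eq_univ_of_forall fun x => mem_iUnion.mpr ((exists_nat_ge x).imp fun _ hn => hn)
  exact hν (Measure.measure_univ_eq_zero.mp (hcover ▸ measure_iUnion_null h))

theorem not_tendsto_thermalTrace_nhdsGT_zero (E : ℝ) (hν : ν ≠ 0)
    (h : ∀ β : ℝ, 0 < β → Integrable (fun x => exp (-β*x)) ν) :
    ¬ Tendsto (fun β => exp (-β*E) * ∫ x, exp (-β*x) ∂ν) (𝓝[>] 0) (𝓝 0) := by
  intro hzero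
  obtain ⟨n, hn⟩ := Measure.exists_measure_Iic_natCast_ne_zero hν
  have hc : 0 < ν.real (Iic (n:ℝ)) :=
    ENNReal.toReal_pos hn ((h 1 one_pos).measure_Iic_lt_top_of_exp zero_le_one n).ne
  have hlower : ∀ᶠ β in 𝓝[>] 0, exp (-β*E) * (exp (-β*n) * ν.real (Iic (n:ℝ))) ≤
      exp (-β*E) * ∫ x, exp (-β*x) ∂ν :=
    eventually_mem_nhdsWithin.mono fun β (hβ : 0 < β) =>
      mul_le_mul_of_nonneg_left (exp_mul_measureReal_Iic_le_integral_exp hβ.le (h β hβ) n)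
        (exp_pos _).le
  have hlimit : Tendsto (fun β : ℝ => exp (-β*E) * (exp (-β*n) * ν.real (Iic (n:ℝ))))
      (𝓝[>] 0) (𝓝 (ν.real (Iic (n:ℝ)))) := by
    have hcont : Continuous fun β : ℝ => exp (-β*E) * (exp (-β*n) * ν.real (Iic (n:ℝ))) := by
      fun_prop
    simpa using (hcont.tendsto 0).mono_left nhdsWithin_le_nhds
  exact hc.not_ge (le_of_tendsto_of_tendsto hlimit hzero hlower)

end MeasureTheory

theorem jt_disk_not_thermal_trace_general (φr ε : ℝ) :
    Tendsto (fun β : ℝ => ∫ k in (0:ℝ)..(φr/ε),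
        k * Real.sinh (2*Real.pi*k) *
          (Real.exp (-β*((φr - Real.sqrt (φr^2 - ε^2*k^2))/ε^2)) -
           Real.exp (-β*((φr + Real.sqrt (φr^2 - ε^2*k^2))/ε^2))))
      (nhdsWithin 0 (Set.Ioi 0)) (nhds 0) ∧
    ¬ ∃ (Estar : ℝ) (ν : Measure ℝ), ν ≠ 0 ∧ ν (Set.Iio 0) = 0 ∧
        ∀ β : ℝ, 0 < β →
          Integrable (fun lam : ℝ => Real.exp (-β*lam)) ν ∧
          (∫ k in (0:ℝ)..(φr/ε),
              k * Real.sinh (2*Real.pi*k) *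
                (Real.exp (-β*((φr - Real.sqrt (φr^2 - ε^2*k^2))/ε^2)) -
                 Real.exp (-β*((φr + Real.sqrt (φr^2 - ε^2*k^2))/ε^2))))
            = Real.exp (-β*Estar) * ∫ lam : ℝ, Real.exp (-β*lam) ∂ν := by
  refine ⟨tendsto_jtDiskAmplitude_nhdsGT_zero φr ε, ?_⟩
  rintro ⟨Estar, ν, hν, -, htrace⟩
  refine not_tendsto_thermalTrace_nhdsGT_zero Estar hν (fun β hβ => (htrace β hβ).1) ?_
  refine (tendsto_jtDiskAmplitude_nhdsGT_zero φr ε).congr' ?_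
  exact eventually_mem_nhdsWithin.mono fun β hβ => (htrace β hβ).2

/-- The exact finite-cutoff JT disk amplitude vanishes as `β → 0⁺` and is not
the ordinary thermal trace of any lower-bounded self-adjoint β-independent
Hamiltonian. -/
theorem jt_disk_not_thermal_trace (φr ε : ℝ) (hφ : 0 < φr) (hε : 0 < ε) :
    Tendsto (fun β : ℝ => ∫ k in (0:ℝ)..(φr/ε),
        k * Real.sinh (2*Real.pi*k) *
          (Real.exp (-β*((φr - Real.sqrt (φr^2 - ε^2*k^2))/ε^2)) -
           Real.exp (-β*((φr + Real.sqrt (φr^2 - ε^2*k^2))/ε^2))))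
      (nhdsWithin 0 (Set.Ioi 0)) (nhds 0) ∧
    ¬ ∃ (Estar : ℝ) (ν : Measure ℝ), ν ≠ 0 ∧ ν (Set.Iio 0) = 0 ∧
        ∀ β : ℝ, 0 < β →
          Integrable (fun lam : ℝ => Real.exp (-β*lam)) ν ∧
          (∫ k in (0:ℝ)..(φr/ε),
              k * Real.sinh (2*Real.pi*k) *
                (Real.exp (-β*((φr - Real.sqrt (φr^2 - ε^2*k^2))/ε^2)) -
                 Real.exp (-β*((φr + Real.sqrt (φr^2 - ε^2*k^2))/ε^2))))
            = Real.exp (-β*Estar) * ∫ lam : ℝ, Real.exp (-β*lam) ∂ν :=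
  jt_disk_not_thermal_trace_general φr ε
end

section
/- For all φr > 0 and β > 0, the exact finite-cutoff disk amplitude converges to the asymptotic Schwarzian disk amplitude in the infinite-cutoff limit: the function ε ↦ ∫₀^{φr/ε} k·sinh(2πk)·(exp(−β·E₋(k;ε)) − exp(−β·E₊(k;ε))) dk tends, as ε → 0⁺, to ∫₀^∞ k·sinh(2πk)·exp(−β·k²/(2φr)) dk (the latter improper integral being finite for every β > 0). -/
/-!
Rationalizing, `E₋(k;ε) = k² / (φr + √(φr² - ε²k²))`, which lies between the Schwarzian
energy `k²/(2φr)` and `E₊(k;ε)`. Hence on `(0, φr/ε]` the finite-cutoff integrand is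
dominated, uniformly in `ε`, by the Schwarzian integrand, which is integrable because
`k sinh(2πk) e^{-ck²}` is `k` times a combination of shifted Gaussians. Pointwise
`E₋ → k²/(2φr)` and `E₊ ≥ φr/ε² → ∞`, so dominated convergence on the growing intervals
`(0, φr/ε]` gives the limit.
-/

open Filter MeasureTheory

open Real Set Topology

theorem integrable_mul_exp_neg_mul_sq_add_mul {c : ℝ} (hc : 0 < c) (b : ℝ) :
    Integrable fun x : ℝ => x * exp (-c * x ^ 2 + b * x) := by
  set a := b / (2 * c)
  have h : Integrable fun x : ℝ => exp (b ^ 2 / (4 * c)) *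
      ((x - a) * exp (-c * (x - a) ^ 2) + a * exp (-c * (x - a) ^ 2)) :=
    (((integrable_mul_exp_neg_mul_sq hc).add
      ((integrable_exp_neg_mul_sq hc).const_mul a)).comp_sub_right a).const_mul _
  refine h.congr (.of_forall fun x => ?_)
  have hsq : -c * x ^ 2 + b * x = b ^ 2 / (4 * c) + -c * (x - a) ^ 2 := by
    simp only [a]; field_simp; ring
  simp only [hsq, exp_add]
  ring

theorem integrable_mul_sinh_mul_exp_neg_mul_sq {c : ℝ} (hc : 0 < c) (b : ℝ) :
    Integrable fun x : ℝ => x * sinh (b * x) * exp (-c * x ^ 2) := by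
  refine (((integrable_mul_exp_neg_mul_sq_add_mul hc b).sub
    (integrable_mul_exp_neg_mul_sq_add_mul hc (-b))).div_const 2).congr
      (.of_forall fun x => ?_)
  simp only [Pi.sub_apply, sinh_eq, exp_add, neg_mul]
  ring

theorem tendsto_intervalIntegral_of_dominated_of_tendsto_atTop
    {ι E : Type*} [NormedAddCommGroup E] [NormedSpace ℝ E] {l : Filter ι}
    [l.IsCountablyGenerated] {F : ι → ℝ → E} {f : ℝ → E} {bound : ℝ → ℝ} {a : ℝ}
    {R : ι → ℝ}
    (hR : Tendsto R l atTop)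
    (hF_meas : ∀ᶠ i in l, AEStronglyMeasurable (F i) (volume.restrict (Ioi a)))
    (h_bound : ∀ᶠ i in l, ∀ x ∈ Ioc a (R i), ‖F i x‖ ≤ bound x)
    (bound_integrable : IntegrableOn bound (Ioi a))
    (h_lim : ∀ x ∈ Ioi a, Tendsto (fun i => F i x) l (𝓝 (f x))) :
    Tendsto (fun i => ∫ x in a..R i, F i x) l (𝓝 (∫ x in Ioi a, f x)) := by
  have h_eq : ∀ᶠ i in l,
      ∫ x in Ioi a, (Ioc a (R i)).indicator (F i) x = ∫ x in a..R i, F i x := by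
    filter_upwards [hR.eventually_ge_atTop a] with i hi
    rw [intervalIntegral.integral_of_le hi, setIntegral_indicator measurableSet_Ioc,
      inter_eq_self_of_subset_right Ioc_subset_Ioi_self]
  -- `|bound|` rather than `bound`: the indicator vanishes where `bound` may be negative.
  refine (tendsto_integral_filter_of_dominated_convergence (fun x => |bound x|) ?_ ?_
    bound_integrable.norm ?_).congr' h_eq
  · filter_upwards [hF_meas] with i hi using hi.indicator measurableSet_Ioc
  · filter_upwards [h_bound] with i hi
    refine .of_forall fun x => ?_
    by_cases hx : x ∈ Ioc a (R i)
    · simpa only [indicator_of_mem hx] using (hi x hx).trans (le_abs_self _)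
    · simp only [indicator_of_notMem hx, norm_zero, abs_nonneg]
  · rw [ae_restrict_iff' measurableSet_Ioi]
    refine .of_forall fun x hx => (h_lim x hx).congr' ?_
    filter_upwards [hR.eventually_ge_atTop x] with i hi
    rw [indicator_of_mem (show x ∈ Ioc a (R i) from ⟨hx, hi⟩)]

noncomputable def energyMinus (φr ε k : ℝ) : ℝ := (φr - √(φr ^ 2 - ε ^ 2 * k ^ 2)) / ε ^ 2

noncomputable def energyPlus (φr ε k : ℝ) : ℝ := (φr + √(φr ^ 2 - ε ^ 2 * k ^ 2)) / ε ^ 2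

section Energy

variable {φr β ε k : ℝ}

theorem energyMinus_le_energyPlus : energyMinus φr ε k ≤ energyPlus φr ε k := by
  unfold energyMinus energyPlus
  gcongr
  linarith [sqrt_nonneg (φr ^ 2 - ε ^ 2 * k ^ 2)]

theorem div_sq_le_energyPlus : φr / ε ^ 2 ≤ energyPlus φr ε k := by
  unfold energyPlus
  gcongr
  linarith [sqrt_nonneg (φr ^ 2 - ε ^ 2 * k ^ 2)]

theorem energyMinus_eq_sq_div (hφ : 0 < φr) (hε : ε ≠ 0) (hk : ε ^ 2 * k ^ 2 ≤ φr ^ 2) :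
    energyMinus φr ε k = k ^ 2 / (φr + √(φr ^ 2 - ε ^ 2 * k ^ 2)) := by
  have hs := sq_sqrt (sub_nonneg.mpr hk)
  have hden : 0 < φr + √(φr ^ 2 - ε ^ 2 * k ^ 2) := by positivity
  rw [energyMinus, div_eq_div_iff (by positivity) hden.ne']
  linear_combination -hs

theorem sq_div_two_mul_le_energyMinus (hφ : 0 < φr) (hε : ε ≠ 0)
    (hk : ε ^ 2 * k ^ 2 ≤ φr ^ 2) : k ^ 2 / (2 * φr) ≤ energyMinus φr ε k := by
  rw [energyMinus_eq_sq_div hφ hε hk]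
  have hsqrt : √(φr ^ 2 - ε ^ 2 * k ^ 2) ≤ φr :=
    (sqrt_le_sqrt (sub_le_self _ (by positivity))).trans_eq (sqrt_sq hφ.le)
  gcongr
  linarith

theorem tendsto_energyMinus (hφ : 0 < φr) (k : ℝ) :
    Tendsto (fun ε => energyMinus φr ε k) (𝓝[≠] 0) (𝓝 (k ^ 2 / (2 * φr))) := by
  have hsqrt : Tendsto (fun ε : ℝ => √(φr ^ 2 - ε ^ 2 * k ^ 2)) (𝓝 0) (𝓝 φr) :=
    (by fun_prop : Continuous fun ε : ℝ => √(φr ^ 2 - ε ^ 2 * k ^ 2)).tendsto' 0 φr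
      (by simp [sqrt_sq hφ.le])
  have hlim : Tendsto (fun ε : ℝ => k ^ 2 / (φr + √(φr ^ 2 - ε ^ 2 * k ^ 2))) (𝓝 0)
      (𝓝 (k ^ 2 / (2 * φr))) := by
    rw [two_mul]
    exact tendsto_const_nhds.div (tendsto_const_nhds.add hsqrt) (by positivity)
  have hk : ∀ᶠ ε : ℝ in 𝓝 0, ε ^ 2 * k ^ 2 ≤ φr ^ 2 :=
    ((by fun_prop : Continuous fun ε : ℝ => ε ^ 2 * k ^ 2).tendsto' 0 0
      (by simp)).eventually_le_const (by positivity)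
  refine (hlim.mono_left nhdsWithin_le_nhds).congr' ?_
  filter_upwards [self_mem_nhdsWithin, nhdsWithin_le_nhds hk] with ε hε hεk
  exact (energyMinus_eq_sq_div hφ hε hεk).symm

theorem tendsto_energyPlus_atTop (hφ : 0 < φr) (k : ℝ) :
    Tendsto (fun ε => energyPlus φr ε k) (𝓝[≠] 0) atTop := by
  have h : Tendsto (fun ε : ℝ => φr * ‖ε⁻¹‖ ^ 2) (𝓝[≠] 0) atTop :=
    ((tendsto_pow_atTop two_ne_zero).comp tendsto_norm_inv_nhdsNE_zero_atTop).const_mul_atTop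
      hφ
  refine tendsto_atTop_mono (fun ε => ?_) h
  rw [norm_inv, inv_pow, norm_eq_abs, sq_abs, ← div_eq_mul_inv]
  exact div_sq_le_energyPlus

theorem abs_exp_energyMinus_sub_exp_energyPlus_le (hφ : 0 < φr) (hβ : 0 ≤ β) (hε : ε ≠ 0)
    (hk : ε ^ 2 * k ^ 2 ≤ φr ^ 2) :
    |exp (-β * energyMinus φr ε k) - exp (-β * energyPlus φr ε k)| ≤
      exp (-(β * k ^ 2 / (2 * φr))) := by
  have hmono : exp (-β * energyPlus φr ε k) ≤ exp (-β * energyMinus φr ε k) :=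
    exp_le_exp.mpr (mul_le_mul_of_nonpos_left energyMinus_le_energyPlus (neg_nonpos.mpr hβ))
  have hgauss : exp (-β * energyMinus φr ε k) ≤ exp (-(β * k ^ 2 / (2 * φr))) := by
    rw [exp_le_exp, neg_mul, neg_le_neg_iff, mul_div_assoc]
    exact mul_le_mul_of_nonneg_left (sq_div_two_mul_le_energyMinus hφ hε hk) hβ
  rw [abs_of_nonneg (sub_nonneg.mpr hmono)]
  linarith [exp_pos (-β * energyPlus φr ε k)]

theorem tendsto_exp_energyMinus_sub_exp_energyPlus (hφ : 0 < φr) (hβ : 0 < β) (k : ℝ) :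
    Tendsto (fun ε => exp (-β * energyMinus φr ε k) - exp (-β * energyPlus φr ε k))
      (𝓝[≠] 0) (𝓝 (exp (-(β * k ^ 2 / (2 * φr))))) := by
  have hminus := (continuous_exp.tendsto _).comp ((tendsto_energyMinus hφ k).const_mul (-β))
  have hplus := tendsto_exp_atBot.comp
    ((tendsto_energyPlus_atTop hφ k).const_mul_atTop_of_neg (neg_neg_of_pos hβ))
  have h := hminus.sub hplus
  rwa [sub_zero, neg_mul, mul_div_assoc'] at h

end Energy

/-- The exact finite-cutoff disk amplitude converges, as `ε → 0⁺`, to the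
asymptotic Schwarzian disk amplitude, the latter being a finite improper
integral. -/
theorem disk_infinite_cutoff_limit (φr β : ℝ) (hφ : 0 < φr) (hβ : 0 < β) :
    IntegrableOn
      (fun k : ℝ => k * Real.sinh (2*Real.pi*k) * Real.exp (-(β*k^2/(2*φr))))
      (Set.Ioi 0) ∧
    Tendsto (fun ε : ℝ => ∫ k in (0:ℝ)..(φr/ε),
        k * Real.sinh (2*Real.pi*k) *
          (Real.exp (-β*((φr - Real.sqrt (φr^2 - ε^2*k^2))/ε^2)) -
           Real.exp (-β*((φr + Real.sqrt (φr^2 - ε^2*k^2))/ε^2))))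
      (nhdsWithin 0 (Set.Ioi 0))
      (nhds (∫ k in Set.Ioi (0:ℝ),
        k * Real.sinh (2*Real.pi*k) * Real.exp (-(β*k^2/(2*φr))))) := by
  have hg : Integrable fun k : ℝ => k * sinh (2 * π * k) * exp (-(β * k ^ 2 / (2 * φr))) := by
    convert integrable_mul_sinh_mul_exp_neg_mul_sq (by positivity : 0 < β / (2 * φr)) (2 * π)
      using 4
    ring
  refine ⟨hg.integrableOn, tendsto_intervalIntegral_of_dominated_of_tendsto_atTop
    (F := fun ε k => k * sinh (2 * π * k) *
      (exp (-β * energyMinus φr ε k) - exp (-β * energyPlus φr ε k))) ?_ ?_ ?_ hg.integrableOn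
    fun k _ => ?_⟩
  · exact (tendsto_inv_nhdsGT_zero.const_mul_atTop hφ).congr fun ε =>
      (div_eq_mul_inv φr ε).symm
  · refine .of_forall fun ε => Continuous.aestronglyMeasurable ?_
    unfold energyMinus energyPlus
    fun_prop
  · filter_upwards [self_mem_nhdsWithin] with ε (hε : 0 < ε) k ⟨hk, hkR⟩
    have hεk : ε ^ 2 * k ^ 2 ≤ φr ^ 2 := by
      rw [← mul_pow]
      exact pow_le_pow_left₀ (by positivity) ((le_div_iff₀' hε).mp hkR) 2
    have hsinh : 0 ≤ k * sinh (2 * π * k) :=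
      mul_nonneg hk.le (sinh_nonneg_iff.mpr (by positivity))
    rw [norm_mul, norm_of_nonneg hsinh, norm_eq_abs]
    exact mul_le_mul_of_nonneg_left
      (abs_exp_energyMinus_sub_exp_energyPlus_le hφ hβ.le hε.ne' hεk) hsinh
  · exact ((tendsto_exp_energyMinus_sub_exp_energyPlus hφ hβ k).mono_left
      (nhdsWithin_mono _ fun ε hε => ne_of_gt hε)).const_mul _
end

section
/- Let R > 0 and let φ : ℝ → ℝ be continuous on [0, R]. Define ψ(b) := √(2/π)·∫₀^R φ(k)·cos(k·b) dk. Then the sample-space Parseval identity holds: ∫₀^∞ ψ(b)² db = (π/(2R))·ψ(0)² + (π/R)·Σ_{n=1}^∞ ψ(nπ/R)², where ψ² is integrable on (0, ∞) and the series on the right converges. -/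
open MeasureTheory Set Real Complex
open scoped ENNReal

/-!
Write `ψ = cosTransform R φ` and `A = (2R/π) ∫₀^R φ²`. For every shift `x`, the samples
`ψ (n π/R + x)`, `n ∈ ℤ`, are up to a constant factor the Fourier coefficients of
`t ↦ φ |t| e^{-ixt}` on `[-R, R]`, so Parseval's identity gives `∑ₙ ψ (n π/R + x)² = A` for all `x`.
Integrating over one period in `x` unfolds the left side to `∫_ℝ ψ² = (π/R) A`, and `ψ` is even,
so `∫₀^∞ ψ² = (π/(2R)) A`. At `x = 0`, evenness folds the same identity into
`ψ 0² + 2 ∑_{n ≥ 1} ψ (n π/R)² = A`, which is the right-hand side of the theorem.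
-/

noncomputable def cosTransform (R : ℝ) (φ : ℝ → ℝ) (b : ℝ) : ℝ :=
  √(2 / π) * ∫ k in (0:ℝ)..R, φ k * Real.cos (k * b)

theorem cosTransform_congr {R : ℝ} {φ φ' : ℝ → ℝ} (h : EqOn φ φ' (uIcc 0 R)) :
    cosTransform R φ = cosTransform R φ' := by
  funext b
  rw [cosTransform, cosTransform, intervalIntegral.integral_congr fun k hk => by rw [h hk]]

theorem even_cosTransform (R : ℝ) (φ : ℝ → ℝ) : Function.Even (cosTransform R φ) := by
  intro b
  simp only [cosTransform, mul_neg, Real.cos_neg]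

theorem continuous_cosTransform (R : ℝ) {φ : ℝ → ℝ} (hφ : Continuous φ) :
    Continuous (cosTransform R φ) := by
  unfold cosTransform
  fun_prop

theorem intervalIntegral_neg_self_eq_integral_add_comp_neg {E : Type*} [NormedAddCommGroup E]
    [NormedSpace ℝ E] {f : ℝ → E} {a : ℝ} (hf : IntervalIntegrable f volume (-a) a) :
    ∫ x in -a..a, f x = ∫ x in (0:ℝ)..a, (f x + f (-x)) := by
  have hzero : (0 : ℝ) ∈ uIcc (-a) a := by rw [mem_uIcc]; grind
  have hleft : IntervalIntegrable f volume (-a) 0 := hf.mono_set (uIcc_subset_uIcc_left hzero)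
  have hright : IntervalIntegrable f volume 0 a := hf.mono_set (uIcc_subset_uIcc_right hzero)
  have hneg : IntervalIntegrable (fun x => f (-x)) volume 0 a := by
    simpa using (IntervalIntegrable.iff_comp_neg).mp hleft.symm
  rw [intervalIntegral.integral_add hright hneg, intervalIntegral.integral_comp_neg, neg_zero,
    add_comm, intervalIntegral.integral_add_adjacent_intervals hleft hright]

theorem intervalIntegral_comp_abs_mul_exp {φ : ℝ → ℝ} (hφ : Continuous φ) {R : ℝ} (hR : 0 ≤ R)
    (v : ℝ) :
    ∫ t in -R..R, (φ |t| : ℂ) * cexp ((-(t * v) : ℝ) * I) =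
      ((2 * ∫ t in (0:ℝ)..R, φ t * Real.cos (t * v) : ℝ) : ℂ) := by
  have hcos (t : ℝ) : (φ t : ℂ) * cexp ((-(t * v) : ℝ) * I) + φ t * cexp ((-(-t * v) : ℝ) * I) =
      ((2 * (φ t * Real.cos (t * v)) : ℝ) : ℂ) := by
    push_cast
    rw [Complex.cos]
    ring_nf
  rw [intervalIntegral_neg_self_eq_integral_add_comp_neg
    ((by fun_prop : Continuous _).intervalIntegrable _ _),
    ← intervalIntegral.integral_const_mul, ← intervalIntegral.integral_ofReal]
  refine intervalIntegral.integral_congr fun t ht => ?_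
  rw [uIcc_of_le hR] at ht
  simp only [abs_neg, abs_of_nonneg ht.1, hcos]

theorem fourierCoeffOn_comp_abs_mul_exp {R : ℝ} (hR : 0 < R) {φ : ℝ → ℝ} (hφ : Continuous φ)
    (u : ℝ) (n : ℤ) :
    fourierCoeffOn (neg_lt_self hR) (fun t => (φ |t| : ℂ) * cexp ((-(u * t) : ℝ) * I)) n =
      ((1 / R * ∫ k in (0:ℝ)..R, φ k * Real.cos (k * (n * (π / R) + u)) : ℝ) : ℂ) := by
  have hexp (t : ℝ) :
      fourier (-n) (t : AddCircle (R - -R)) * ((φ |t| : ℂ) * cexp ((-(u * t) : ℝ) * I)) =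
        φ |t| * cexp ((-(t * (n * (π / R) + u)) : ℝ) * I) := by
    rw [fourier_coe_apply, mul_left_comm, ← Complex.exp_add]
    congr 2
    push_cast
    field_simp
    ring
  rw [fourierCoeffOn_eq_integral, Complex.real_smul]
  simp_rw [smul_eq_mul, hexp, intervalIntegral_comp_abs_mul_exp hφ hR.le]
  generalize ∫ k in (0:ℝ)..R, φ k * Real.cos (k * (n * (π / R) + u)) = J
  rw [sub_neg_eq_add, ← two_mul]
  push_cast
  field_simp

theorem hasSum_sq_cosTransform_int_mul_add {R : ℝ} (hR : 0 < R) {φ : ℝ → ℝ} (hφ : Continuous φ)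
    (x : ℝ) :
    HasSum (fun n : ℤ => cosTransform R φ (n * (π / R) + x) ^ 2)
      (2 * R / π * ∫ k in (0:ℝ)..R, φ k ^ 2) := by
  set g : ℝ → ℂ := fun t => (φ |t| : ℂ) * cexp ((-(x * t) : ℝ) * I)
  have hg : Continuous g := by fun_prop
  have hg2 : MemLp g 2 (volume.restrict (Ioc (-R) R)) :=
    (memLp_two_iff_integrable_sq_norm hg.aestronglyMeasurable).mpr
      (by fun_prop : Continuous fun t => ‖g t‖ ^ 2).integrableOn_Ioc
  have hnorm (t : ℝ) : ‖g t‖ ^ 2 = φ |t| ^ 2 := by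
    simp only [g, norm_mul, Complex.norm_real, Complex.norm_exp_ofReal_mul_I, mul_one,
      Real.norm_eq_abs, sq_abs]
  have hL2 : ∫ t in -R..R, ‖g t‖ ^ 2 = 2 * ∫ k in (0:ℝ)..R, φ k ^ 2 := by
    simp only [hnorm]
    rw [intervalIntegral_neg_self_eq_integral_add_comp_neg
      ((by fun_prop : Continuous fun t => φ |t| ^ 2).intervalIntegrable _ _),
      ← intervalIntegral.integral_const_mul]
    refine intervalIntegral.integral_congr fun t ht => ?_
    rw [uIcc_of_le hR.le] at ht
    simp only [abs_neg, abs_of_nonneg ht.1]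
    ring
  have hparseval := hasSum_sq_fourierCoeffOn (neg_lt_self hR) hg2
  simp only [g, fourierCoeffOn_comp_abs_mul_exp hR hφ, Complex.norm_real, Real.norm_eq_abs,
    sq_abs] at hparseval
  rw [hL2] at hparseval
  have hvalue : 2 * R ^ 2 / π * ((R - -R)⁻¹ • (2 * ∫ k in (0:ℝ)..R, φ k ^ 2)) =
      2 * R / π * ∫ k in (0:ℝ)..R, φ k ^ 2 := by
    rw [smul_eq_mul, sub_neg_eq_add]
    field_simp
    ring
  refine hvalue ▸ (hparseval.mul_left (2 * R ^ 2 / π)).congr_fun fun n => ?_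
  rw [cosTransform, mul_pow, Real.sq_sqrt (by positivity)]
  generalize ∫ k in (0:ℝ)..R, φ k * Real.cos (k * (n * (π / R) + x)) = J
  field_simp

theorem lintegral_eq_ofReal_mul_of_tsum_int_mul_add {T : ℝ} (hT : 0 < T) {f : ℝ → ℝ≥0∞}
    (hf : Measurable f) {c : ℝ≥0∞} (hc : ∀ x, ∑' n : ℤ, f (n * T + x) = c) :
    ∫⁻ x, f x = ENNReal.ofReal T * c := by
  let e : ℤ ≃ AddSubgroup.zmultiples T := Equiv.ofBijective (fun n => ⟨n • T, n, rfl⟩)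
    ⟨fun m n hmn => (zsmul_left_strictMono hT).injective (congrArg Subtype.val hmn),
      fun ⟨_, n, hn⟩ => ⟨n, Subtype.ext hn⟩⟩
  have hvadd (n : ℤ) (x : ℝ) : e n +ᵥ x = n * T + x := by
    rw [AddSubgroup.vadd_def, vadd_eq_add, ← zsmul_eq_mul]
    rfl
  rw [(isAddFundamentalDomain_Ioc hT 0 volume).lintegral_eq_tsum'', ← e.tsum_eq]
  simp only [hvadd]
  rw [← lintegral_tsum (f := fun (n : ℤ) x => f (n * T + x))
    fun n => (hf.comp (measurable_const_add _)).aemeasurable, zero_add,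
    setLIntegral_congr_fun measurableSet_Ioc fun x _ => hc x, setLIntegral_const, Real.volume_Ioc,
    sub_zero, mul_comm]

theorem lintegral_ofReal_eq_of_hasSum_int_mul_add {T : ℝ} (hT : 0 < T) {f : ℝ → ℝ}
    (hf : Measurable f) (hf₀ : 0 ≤ f) {c : ℝ} (hc : ∀ x, HasSum (fun n : ℤ => f (n * T + x)) c) :
    ∫⁻ x, ENNReal.ofReal (f x) = ENNReal.ofReal (T * c) := by
  rw [ENNReal.ofReal_mul hT.le]
  refine lintegral_eq_ofReal_mul_of_tsum_int_mul_add hT hf.ennreal_ofReal fun x => ?_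
  rw [← ENNReal.ofReal_tsum_of_nonneg (fun n => hf₀ _) (hc x).summable, (hc x).tsum_eq]

theorem integrable_of_hasSum_int_mul_add {T : ℝ} (hT : 0 < T) {f : ℝ → ℝ}
    (hf : Measurable f) (hf₀ : 0 ≤ f) {c : ℝ} (hc : ∀ x, HasSum (fun n : ℤ => f (n * T + x)) c) :
    Integrable f := by
  refine ⟨hf.aestronglyMeasurable, ?_⟩
  rw [hasFiniteIntegral_iff_ofReal (ae_of_all _ hf₀),
    lintegral_ofReal_eq_of_hasSum_int_mul_add hT hf hf₀ hc]
  exact ENNReal.ofReal_lt_top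

theorem integral_eq_mul_of_hasSum_int_mul_add {T : ℝ} (hT : 0 < T) {f : ℝ → ℝ}
    (hf : Measurable f) (hf₀ : 0 ≤ f) {c : ℝ} (hc : ∀ x, HasSum (fun n : ℤ => f (n * T + x)) c) :
    ∫ x, f x = T * c := by
  rw [integral_eq_lintegral_of_nonneg_ae (ae_of_all _ hf₀) hf.aestronglyMeasurable,
    lintegral_ofReal_eq_of_hasSum_int_mul_add hT hf hf₀ hc,
    ENNReal.toReal_ofReal (mul_nonneg hT.le ((hc 0).nonneg fun n => hf₀ _))]

theorem Function.Even.integral_Ioi_eq_half {f : ℝ → ℝ} (hf : Function.Even f) :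
    ∫ x in Ioi 0, f x = (∫ x, f x) / 2 := by
  have habs (x : ℝ) : f |x| = f x := by
    rcases abs_choice x with h | h <;> rw [h]
    exact hf x
  have h := integral_comp_abs (f := f)
  simp only [habs] at h
  linarith

theorem HasSum.nat_add_one_of_even {E : Type*} [NormedAddCommGroup E] [NormedSpace ℝ E]
    [CompleteSpace E] {f : ℤ → E} {a : E} (hf : HasSum f a) (heven : Function.Even f) :
    HasSum (fun n : ℕ => f (n + 1)) ((2 : ℝ)⁻¹ • (a - f 0)) := by
  have hpos : HasSum (fun n : ℕ => f (n + 1)) (∑' n : ℕ, f (n + 1)) :=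
    (hf.summable.comp_injective fun m n h => by simpa using h).hasSum
  have hsplit := hpos.of_add_one_of_neg_add_one (hpos.congr_fun fun n => heven _)
  rw [hf.unique hsplit]
  convert hpos using 1
  module

theorem cosTransform_sampled_parseval {R : ℝ} (hR : 0 < R) {φ : ℝ → ℝ} (hφ : Continuous φ) :
    IntegrableOn (fun b => cosTransform R φ b ^ 2) (Ioi 0) ∧
    Summable (fun n : ℕ => cosTransform R φ ((n + 1) * π / R) ^ 2) ∧
    ∫ b in Ioi 0, cosTransform R φ b ^ 2 =
      π / (2 * R) * cosTransform R φ 0 ^ 2 +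
        π / R * ∑' n : ℕ, cosTransform R φ ((n + 1) * π / R) ^ 2 := by
  have hsamples := hasSum_sq_cosTransform_int_mul_add hR hφ
  set ψ := cosTransform R φ
  set A := 2 * R / π * ∫ k in (0:ℝ)..R, φ k ^ 2
  have hh : 0 < π / R := div_pos pi_pos hR
  have hmeas : Measurable fun b => ψ b ^ 2 := ((continuous_cosTransform R hφ).pow 2).measurable
  have hnonneg : 0 ≤ fun b => ψ b ^ 2 := fun b => sq_nonneg _
  have heven : Function.Even fun b => ψ b ^ 2 := (even_cosTransform R φ).left_comp (· ^ 2)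
  have hhalf : ∫ b in Ioi 0, ψ b ^ 2 = π / R * A / 2 := by
    rw [heven.integral_Ioi_eq_half, integral_eq_mul_of_hasSum_int_mul_add hh hmeas hnonneg hsamples]
  have hnyquist : HasSum (fun n : ℕ => ψ ((n + 1) * π / R) ^ 2) ((A - ψ 0 ^ 2) / 2) := by
    have hsamples_even : Function.Even fun n : ℤ => ψ (n * (π / R) + 0) ^ 2 := fun n => by
      simpa [neg_mul] using heven (n * (π / R))
    have h := (hsamples 0).nat_add_one_of_even hsamples_even
    rw [smul_eq_mul, Int.cast_zero, zero_mul, zero_add, ← div_eq_inv_mul] at h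
    exact h.congr_fun fun n => by push_cast; ring_nf
  refine ⟨(integrable_of_hasSum_int_mul_add hh hmeas hnonneg hsamples).integrableOn,
    hnyquist.summable, ?_⟩
  rw [hhalf, hnyquist.tsum_eq]
  field_simp
  ring

/-- Sample-space Parseval identity for the bandlimited geodesic sector:
the `L²(0,∞)`-norm of an `R`-bandlimited (cosine-sense) function is given by
its weighted Nyquist samples. -/
theorem sampled_parseval (R : ℝ) (hR : 0 < R) (φ : ℝ → ℝ)
    (hφ : ContinuousOn φ (Set.Icc 0 R)) :
    IntegrableOn
      (fun b : ℝ => (Real.sqrt (2/Real.pi) * ∫ k in (0:ℝ)..R, φ k * Real.cos (k*b))^2)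
      (Set.Ioi 0) ∧
    Summable (fun n : ℕ =>
      (Real.sqrt (2/Real.pi)
        * ∫ k in (0:ℝ)..R, φ k * Real.cos (k*(((n:ℝ)+1)*Real.pi/R)))^2) ∧
    (∫ b in Set.Ioi (0:ℝ),
        (Real.sqrt (2/Real.pi) * ∫ k in (0:ℝ)..R, φ k * Real.cos (k*b))^2)
      = (Real.pi/(2*R)) *
          (Real.sqrt (2/Real.pi) * ∫ k in (0:ℝ)..R, φ k * Real.cos (k*0))^2
        + (Real.pi/R) * ∑' n : ℕ,
            (Real.sqrt (2/Real.pi)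
              * ∫ k in (0:ℝ)..R, φ k * Real.cos (k*(((n:ℝ)+1)*Real.pi/R)))^2 := by
  obtain ⟨φ', hφ', hφφ'⟩ : ∃ φ' : ℝ → ℝ, Continuous φ' ∧ EqOn φ' φ (uIcc 0 R) :=
    ⟨IccExtend hR.le ((Icc 0 R).domRestrict φ),
      (continuousOn_iff_continuous_domRestrict.mp hφ).comp continuous_projIcc,
      fun k hk => IccExtend_of_mem hR.le _ (uIcc_of_le hR.le ▸ hk)⟩
  have key := cosTransform_sampled_parseval hR hφ'
  rw [cosTransform_congr hφφ'] at key
  exact key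
end

section
/- Let R > 0 and let φ : ℝ → ℝ be continuous on [0, R]. Define ψ(b) := √(2/π)·∫₀^R φ(k)·cos(k·b) dk. Then for every real b ≥ 0, the Shannon interpolation series converges and reconstructs ψ exactly: ψ(b) = ψ(0)·sinc(R·b/π) + Σ_{n=1}^∞ ψ(nπ/R)·(sinc(R·b/π − n) + sinc(R·b/π + n)). -/
/-!
Fix `b` and put `u = R b / π`. The `2R`-periodic extension of `x ↦ cos (x b)` from `(-R, R]` is
continuous, and its Fourier coefficients are `(sinc (u - n) + sinc (u + n)) / 2`. Each summand
alone is only `O(1/n)`, but `sin (π (u + n)) = sin (π (u - n))` makes their sum `O(1/n²)`, so the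
Fourier series converges absolutely and pointwise: for `k ∈ (-R, R]`,
`cos (k b) = sinc u + ∑_{n ≥ 1} (sinc (u - n) + sinc (u + n)) cos (n π k / R)`.
Multiplying by `φ k` and integrating over `[0, R]` term by term (the series is dominated by a
multiple of `|φ|`) turns the cosine integrals into the samples `ψ (n π / R)`.
-/

noncomputable def sinc (u : ℝ) : ℝ :=
  if u = 0 then 1 else Real.sin (Real.pi * u) / (Real.pi * u)

open Real hiding sinc sinc_neg sinc_of_ne_zero
open MeasureTheory Set

lemma hasSum_two_mul_fourierCoeff_mul_cos {T : ℝ} [Fact (0 < T)] {f : C(AddCircle T, ℂ)}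
    (hf : Summable (fourierCoeff f)) (heven : ∀ n, fourierCoeff f (-n) = fourierCoeff f n)
    (x : ℝ) :
    HasSum (fun n : ℕ => 2 * fourierCoeff f (n + 1) * Complex.cos (2 * π * (n + 1) * x / T))
      (f x - fourierCoeff f 0) := by
  have hpair := (has_pointwise_sum_fourier_series_of_summable hf x).nat_add_neg
  have hterm : ∀ n : ℕ, fourierCoeff f n • fourier n (x : AddCircle T)
      + fourierCoeff f (-n) • fourier (-n) (x : AddCircle T)
      = 2 * fourierCoeff f n * Complex.cos (2 * π * n * x / T) := fun n => by
    rw [heven, fourier_coe_apply, fourier_coe_apply, Complex.cos, smul_eq_mul, smul_eq_mul]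
    push_cast
    ring_nf
  simp_rw [hterm] at hpair
  have hshift := (hasSum_nat_add_iff' 1).2 hpair
  simp only [Finset.sum_range_one, Nat.cast_zero, fourier_zero, smul_eq_mul, Nat.cast_add,
    Nat.cast_one, mul_zero, zero_mul, zero_div, Complex.cos_zero, mul_one] at hshift
  rwa [add_sub_assoc, ← one_sub_mul, show (1 : ℂ) - 2 = -1 by norm_num, neg_one_mul,
    ← sub_eq_add_neg] at hshift

theorem hasSum_integral_mul_of_summable_abs {α : Type*} [MeasurableSpace α] {μ : Measure α}
    {φ : α → ℝ} (hφ : Integrable φ μ) {a : ℕ → ℝ} (ha : Summable fun n => |a n|)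
    {g : ℕ → α → ℝ} (hg : ∀ n, AEStronglyMeasurable (g n) μ) (hg_le : ∀ n x, |g n x| ≤ 1)
    {h : α → ℝ} (hh : ∀ᵐ x ∂μ, HasSum (fun n => a n * g n x) (h x)) :
    HasSum (fun n => a n * ∫ x, φ x * g n x ∂μ) (∫ x, φ x * h x ∂μ) := by
  have hint : ∀ n, Integrable (fun x => a n * (φ x * g n x)) μ := fun n =>
    (hφ.mul_bdd (hg n) (.of_forall (hg_le n))).const_mul (a n)
  have hnorm : ∀ n, ∫ x, ‖a n * (φ x * g n x)‖ ∂μ ≤ |a n| * ∫ x, ‖φ x‖ ∂μ := fun n => by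
    rw [← integral_const_mul]
    refine integral_mono (hint n).norm (hφ.norm.const_mul _) fun x => ?_
    rw [norm_mul, norm_mul, Real.norm_eq_abs (a n), Real.norm_eq_abs (g n x)]
    exact mul_le_mul_of_nonneg_left (mul_le_of_le_one_right (norm_nonneg _) (hg_le n x))
      (abs_nonneg _)
  have hsum := hasSum_integral_of_summable_integral_norm hint
    (.of_nonneg_of_le (fun n => integral_nonneg fun x => norm_nonneg _) hnorm (ha.mul_right _))
  simp_rw [integral_const_mul] at hsum
  have hpoint : ∀ᵐ x ∂μ, ∑' n, a n * (φ x * g n x) = φ x * h x := hh.mono fun x hx => by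
    simp_rw [mul_left_comm (a _), ((hx.mul_left (φ x)).tsum_eq)]
  rwa [integral_congr_ae hpoint] at hsum

lemma sinc_eq_real_sinc (u : ℝ) : sinc u = Real.sinc (π * u) := by
  simp [sinc, Real.sinc, pi_ne_zero]

lemma sinc_of_ne_zero {u : ℝ} (hu : u ≠ 0) : sinc u = sin (π * u) / (π * u) := if_neg hu

lemma sinc_neg (u : ℝ) : sinc (-u) = sinc u := by
  rw [sinc_eq_real_sinc, sinc_eq_real_sinc, mul_neg, Real.sinc_neg]

lemma integral_exp_mul_I_eq_two_mul_sinc (R γ : ℝ) :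
    ∫ x in -R..R, Complex.exp ((γ * x : ℝ) * Complex.I) = (2 * R * sinc (γ * R / π) : ℝ) := by
  rcases eq_or_ne γ 0 with rfl | hγ
  · simp [sinc_eq_real_sinc]
    ring
  have hsub := intervalIntegral.integral_comp_mul_left
    (fun t : ℝ => Complex.exp (t * Complex.I)) (a := -R) (b := R) hγ
  simp only [Complex.ofReal_mul] at hsub ⊢
  rw [hsub, mul_neg, integral_exp_mul_I_eq_sinc, sinc_eq_real_sinc, mul_div_cancel₀ _ pi_ne_zero,
    Complex.real_smul]
  push_cast
  field_simp [Complex.ofReal_ne_zero.2 hγ]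

lemma fourier_neg_mul_cos (R b : ℝ) (n : ℤ) (x : ℝ) :
    fourier (-n) (x : AddCircle (2 * R)) * (cos (x * b) : ℂ)
      = (Complex.exp (((b - n * π / R) * x : ℝ) * Complex.I)
          + Complex.exp (((-b - n * π / R) * x : ℝ) * Complex.I)) / 2 := by
  rw [fourier_coe_apply, Complex.ofReal_cos, Complex.cos, mul_div_assoc', mul_add,
    ← Complex.exp_add, ← Complex.exp_add]
  congr 3 <;> push_cast <;> ring

lemma integral_fourier_neg_mul_cos (R b : ℝ) (n : ℤ) :
    ∫ x in -R..R, fourier (-n) (x : AddCircle (2 * R)) * (cos (x * b) : ℂ)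
      = (R * (sinc (R * b / π - n) + sinc (R * b / π + n)) : ℝ) := by
  rcases eq_or_ne R 0 with rfl | hR
  · simp
  have hint : ∀ γ : ℝ, IntervalIntegrable (fun x : ℝ => Complex.exp ((γ * x : ℝ) * Complex.I))
      volume (-R) R := fun γ => by apply Continuous.intervalIntegrable; fun_prop
  simp_rw [fourier_neg_mul_cos, intervalIntegral.integral_div,
    intervalIntegral.integral_add (hint _) (hint _), integral_exp_mul_I_eq_two_mul_sinc]
  have e₁ : (b - n * π / R) * R / π = R * b / π - n := by field_simp
  have e₂ : (-b - n * π / R) * R / π = -(R * b / π + n) := by field_simp; ring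
  rw [e₁, e₂, sinc_neg]
  push_cast
  ring

lemma sinc_sub_add_sinc_add_eq {u : ℝ} {n : ℕ} (hu : u ^ 2 ≠ n ^ 2) :
    sinc (u - n) + sinc (u + n) = sin (π * (u - n)) * (2 * u / (π * (u ^ 2 - n ^ 2))) := by
  have h₁ : u - n ≠ 0 := fun h => hu (by rw [sub_eq_zero.1 h])
  have h₂ : u + n ≠ 0 := fun h => hu (by rw [eq_neg_of_add_eq_zero_left h, neg_sq])
  have hsin : sin (π * (u + n)) = sin (π * (u - n)) := by
    rw [show π * (u + n) = π * (u - n) + n * (2 * π) by ring, sin_add_nat_mul_two_pi]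
  rw [sinc_of_ne_zero h₁, sinc_of_ne_zero h₂, hsin]
  field_simp
  ring

lemma abs_sinc_sub_add_sinc_add_le {u : ℝ} {n : ℕ} (hn : 2 * |u| < n) :
    |sinc (u - n) + sinc (u + n)| ≤ 4 * |u| / n ^ 2 := by
  have hn₀ : (0 : ℝ) < n := (mul_nonneg zero_le_two (abs_nonneg u)).trans_lt hn
  have hu : u ^ 2 < n ^ 2 / 4 := by
    rw [← sq_abs]; nlinarith [abs_nonneg u]
  have hlt : u ^ 2 < n ^ 2 := by nlinarith
  have hden : (n : ℝ) ^ 2 / 2 ≤ π * (n ^ 2 - u ^ 2) := by nlinarith [pi_gt_three]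
  rw [sinc_sub_add_sinc_add_eq hlt.ne, abs_mul, abs_div, abs_mul, abs_mul, abs_two,
    abs_of_pos pi_pos, abs_of_neg (sub_neg.2 hlt), neg_sub]
  calc |sin (π * (u - n))| * (2 * |u| / (π * (n ^ 2 - u ^ 2)))
      ≤ 1 * (2 * |u| / (n ^ 2 / 2)) := by
        gcongr
        exact abs_sin_le_one _
    _ = 4 * |u| / n ^ 2 := by ring

lemma summable_sinc_sub_add_sinc_add (u : ℝ) :
    Summable fun n : ℕ => sinc (u - n) + sinc (u + n) := by
  refine Summable.of_norm_bounded_eventually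
    (by simpa [div_eq_mul_inv] using (summable_nat_pow_inv.2 one_lt_two).mul_left (4 * |u|)) ?_
  rw [Nat.cofinite_eq_atTop]
  filter_upwards [Filter.eventually_gt_atTop ⌈2 * |u|⌉₊] with n hn
  exact abs_sinc_sub_add_sinc_add_le (Nat.lt_of_ceil_lt hn)

noncomputable def periodicCos (R b : ℝ) [Fact (0 < 2 * R)] : C(AddCircle (2 * R), ℂ) :=
  ⟨AddCircle.liftIoc (2 * R) (-R) fun x => (cos (x * b) : ℂ),
    AddCircle.liftIoc_continuous (by rw [show -R + 2 * R = R by ring, neg_mul, cos_neg])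
      (by fun_prop)⟩

section

variable {R : ℝ} [Fact (0 < 2 * R)]

lemma periodicCos_coe_apply (b : ℝ) {x : ℝ} (hx : x ∈ Ioc (-R) R) :
    periodicCos R b x = cos (x * b) :=
  AddCircle.liftIoc_coe_apply (p := 2 * R) (a := -R) (f := fun x => (cos (x * b) : ℂ))
    (by rwa [show -R + 2 * R = R by ring])

lemma fourierCoeff_periodicCos (b : ℝ) (n : ℤ) :
    fourierCoeff (periodicCos R b) n
      = ((sinc (R * b / π - n) + sinc (R * b / π + n)) / 2 : ℝ) := by
  have hR : 0 < R := by linarith [(Fact.out : 0 < 2 * R)]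
  rw [fourierCoeff_eq_intervalIntegral _ n (-R), show -R + 2 * R = R by ring,
    intervalIntegral.integral_congr_Ioo_of_le (by linarith)
      (g := fun x : ℝ => fourier (-n) (x : AddCircle (2 * R)) * (cos (x * b) : ℂ))
      (fun x hx => by rw [periodicCos_coe_apply b (Ioo_subset_Ioc_self hx), smul_eq_mul]),
    integral_fourier_neg_mul_cos, Complex.real_smul]
  push_cast
  field_simp [Complex.ofReal_ne_zero.2 hR.ne']

lemma fourierCoeff_periodicCos_neg (b : ℝ) (n : ℤ) :
    fourierCoeff (periodicCos R b) (-n) = fourierCoeff (periodicCos R b) n := by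
  rw [fourierCoeff_periodicCos, fourierCoeff_periodicCos, Int.cast_neg, sub_neg_eq_add,
    ← sub_eq_add_neg, add_comm (sinc _)]

lemma summable_fourierCoeff_periodicCos (b : ℝ) : Summable (fourierCoeff (periodicCos R b)) := by
  have hnat : Summable fun n : ℕ => fourierCoeff (periodicCos R b) n := by
    simpa [fourierCoeff_periodicCos] using
      Complex.summable_ofReal.2 ((summable_sinc_sub_add_sinc_add (R * b / π)).div_const 2)
  exact .of_nat_of_neg hnat (by simpa [fourierCoeff_periodicCos_neg] using hnat)

end

theorem hasSum_sinc_mul_cos {R : ℝ} (hR : 0 < R) (b : ℝ) {k : ℝ} (hk : k ∈ Ioc (-R) R) :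
    HasSum (fun n : ℕ => (sinc (R * b / π - (n + 1)) + sinc (R * b / π + (n + 1)))
        * cos (k * ((n + 1) * π / R)))
      (cos (k * b) - sinc (R * b / π)) := by
  have : Fact (0 < 2 * R) := ⟨by positivity⟩
  have h := hasSum_two_mul_fourierCoeff_mul_cos (summable_fourierCoeff_periodicCos (R := R) b)
    (fourierCoeff_periodicCos_neg b) k
  simp only [fourierCoeff_periodicCos, periodicCos_coe_apply b hk] at h
  refine Complex.hasSum_ofReal.1 ?_
  convert h using 1
  · ext n
    push_cast
    field_simp
  · simp

theorem hasSum_sinc_mul_integral_mul_cos {R : ℝ} (hR : 0 < R) {φ : ℝ → ℝ}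
    (hφ : IntervalIntegrable φ volume 0 R) (b : ℝ) :
    HasSum (fun n : ℕ => (sinc (R * b / π - (n + 1)) + sinc (R * b / π + (n + 1)))
        * ∫ k in 0..R, φ k * cos (k * ((n + 1) * π / R)))
      ((∫ k in 0..R, φ k * cos (k * b)) - (∫ k in 0..R, φ k) * sinc (R * b / π)) := by
  rw [intervalIntegrable_iff_integrableOn_Ioc_of_le hR.le] at hφ
  have hcoeff : Summable fun n : ℕ =>
      |sinc (R * b / π - (n + 1)) + sinc (R * b / π + (n + 1))| := by
    simpa using (summable_nat_add_iff 1).2 (summable_sinc_sub_add_sinc_add (R * b / π)).abs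
  have hsum := hasSum_integral_mul_of_summable_abs hφ hcoeff
    (g := fun n k => cos (k * ((n + 1) * π / R))) (fun n => by fun_prop)
    (fun n k => abs_cos_le_one _)
    (ae_restrict_of_forall_mem measurableSet_Ioc fun k hk =>
      hasSum_sinc_mul_cos hR b ⟨by linarith [hk.1], hk.2⟩)
  have hφcos : IntegrableOn (fun k => φ k * cos (k * b)) (Ioc 0 R) :=
    hφ.mul_bdd (by fun_prop) (.of_forall fun k => abs_cos_le_one _)
  rw [← intervalIntegrable_iff_integrableOn_Ioc_of_le hR.le] at hφ hφcos
  simp_rw [← intervalIntegral.integral_of_le hR.le, mul_sub] at hsum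
  rwa [intervalIntegral.integral_sub hφcos (hφ.mul_const _),
    intervalIntegral.integral_mul_const] at hsum

theorem shannon_reconstruction_general (R : ℝ) (hR : 0 < R) (φ : ℝ → ℝ)
    (hφ : ContinuousOn φ (Set.Icc 0 R)) (b : ℝ) :
    HasSum
      (fun n : ℕ =>
        (Real.sqrt (2/Real.pi)
            * ∫ k in (0:ℝ)..R, φ k * Real.cos (k*(((n:ℝ)+1)*Real.pi/R)))
          * (sinc (R*b/Real.pi - ((n:ℝ)+1)) + sinc (R*b/Real.pi + ((n:ℝ)+1))))
      ((Real.sqrt (2/Real.pi) * ∫ k in (0:ℝ)..R, φ k * Real.cos (k*b))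
        - (Real.sqrt (2/Real.pi) * ∫ k in (0:ℝ)..R, φ k * Real.cos (k*0))
            * sinc (R*b/Real.pi)) := by
  have h := (hasSum_sinc_mul_integral_mul_cos hR (hφ.intervalIntegrable_of_Icc hR.le) b).mul_left
    (√(2 / π))
  simp only [mul_zero, cos_zero, mul_one]
  rw [mul_sub, ← mul_assoc] at h
  exact h.congr_fun fun n => by ring

/-- Shannon reconstruction on the finite-cutoff geodesic sector: an
`R`-bandlimited (cosine-sense) function `ψ` is exactly reconstructed, at every
`b ≥ 0`, from its Nyquist samples `ψ(nπ/R)`; the interpolation series (indexed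
by `n ≥ 1`, written as `n+1` over `ℕ`) converges to `ψ(b) − ψ(0)·sinc(Rb/π)`. -/
theorem shannon_reconstruction (R : ℝ) (hR : 0 < R) (φ : ℝ → ℝ)
    (hφ : ContinuousOn φ (Set.Icc 0 R)) (b : ℝ) (hb : 0 ≤ b) :
    HasSum
      (fun n : ℕ =>
        (Real.sqrt (2/Real.pi)
            * ∫ k in (0:ℝ)..R, φ k * Real.cos (k*(((n:ℝ)+1)*Real.pi/R)))
          * (sinc (R*b/Real.pi - ((n:ℝ)+1)) + sinc (R*b/Real.pi + ((n:ℝ)+1))))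
      ((Real.sqrt (2/Real.pi) * ∫ k in (0:ℝ)..R, φ k * Real.cos (k*b))
        - (Real.sqrt (2/Real.pi) * ∫ k in (0:ℝ)..R, φ k * Real.cos (k*0))
            * sinc (R*b/Real.pi)) :=
  shannon_reconstruction_general R hR φ hφ b
end
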